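/- arXiv:1509.04981 — 2 statements merged into one kernel-verified Lean document; each statement's English description precedes it below -/
import Mathlib

section
/- Assume F(0) = 0 and R'(0) = 0. Then for all t ∈ ℝ one has F(−t) = −F(t) and R(−t) = R(t); that is, F is an odd function and R is an even function. -/
/-!
With `x = (F, R)` the system reads `x'' = w x` for a force field `w` that commutes with the
reflection `σ (F, R) = (-F, R)`. Hence `t ↦ σ (x (-t))` solves the same equation, and
`F 0 = 0`, `R' 0 = 0` say that it starts from the same state `(x 0, x' 0)` as `x`. Since `w` is
`C¹` away from `R = 0`, uniqueness of solutions gives `σ (x (-t)) = x t`.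
-/

open Set

section Autonomous

variable {E : Type*} [NormedAddCommGroup E] [NormedSpace ℝ E]

theorem ODE_solution_unique_of_contDiffAt {v : E → E} {f g : ℝ → E} {t₀ : ℝ}
    (hv : ∀ t, ContDiffAt ℝ 1 v (f t))
    (hf : ∀ t, HasDerivAt f (v (f t)) t) (hg : ∀ t, HasDerivAt g (v (g t)) t)
    (heq : f t₀ = g t₀) : f = g := by
  have hfc : Continuous f := continuous_iff_continuousAt.2 fun t ↦ (hf t).continuousAt
  have hgc : Continuous g := continuous_iff_continuousAt.2 fun t ↦ (hg t).continuousAt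
  -- The agreement set is clopen; it is open because `v`, being `C¹`, is locally Lipschitz.
  have hopen : IsOpen {t | f t = g t} := by
    refine isOpen_iff_mem_nhds.2 fun t₁ (ht₁ : f t₁ = g t₁) ↦ ?_
    obtain ⟨K, s, hs, hlip⟩ := (hv t₁).exists_lipschitzOnWith
    refine ODE_solution_unique_of_eventually (v := fun _ ↦ v) (s := fun _ ↦ s)
      (.of_forall fun _ ↦ hlip) ?_ ?_ ht₁
    · filter_upwards [hfc.continuousAt.preimage_mem_nhds hs] with t ht using ⟨hf t, ht⟩
    · filter_upwards [hgc.continuousAt.preimage_mem_nhds (ht₁ ▸ hs)] with t ht using ⟨hg t, ht⟩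
  exact funext <| eq_univ_iff_forall.1 <|
    IsClopen.eq_univ ⟨isClosed_eq hfc hgc, hopen⟩ ⟨t₀, heq⟩

theorem hasDerivAt_timeReversal {v : E → E} {σ : E →L[ℝ] E} (hσ : ∀ x, v (σ x) = -σ (v x))
    {f : ℝ → E} (hf : ∀ t, HasDerivAt f (v (f t)) t) (t : ℝ) :
    HasDerivAt (fun s ↦ σ (f (-s))) (v (σ (f (-t)))) t := by
  have := σ.hasFDerivAt.comp_hasDerivAt t ((hf (-t)).scomp t (hasDerivAt_neg t))
  exact this.congr_deriv (by simp [hσ])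

theorem ODE_solution_timeReversal_eq {v : E → E} {σ : E →L[ℝ] E}
    (hσ : ∀ x, v (σ x) = -σ (v x)) {f : ℝ → E} (hv : ∀ t, ContDiffAt ℝ 1 v (f t))
    (hf : ∀ t, HasDerivAt f (v (f t)) t) (h0 : σ (f 0) = f 0) (t : ℝ) :
    σ (f (-t)) = f t :=
  congrFun (ODE_solution_unique_of_contDiffAt (t₀ := 0) hv hf (hasDerivAt_timeReversal hσ hf)
    (by simpa using h0.symm)) t |>.symm

theorem ODE_secondOrder_timeReversal_eq {w : E → E} {σ : E →L[ℝ] E}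
    (hσ : ∀ x, w (σ x) = σ (w x)) {x x' : ℝ → E} (hw : ∀ t, ContDiffAt ℝ 1 w (x t))
    (hx : ∀ t, HasDerivAt x (x' t) t) (hx' : ∀ t, HasDerivAt x' (w (x t)) t)
    (h0 : σ (x 0) = x 0) (h0' : σ (x' 0) = -x' 0) (t : ℝ) :
    σ (x (-t)) = x t := by
  have := ODE_solution_timeReversal_eq (v := fun p : E × E ↦ (p.2, w p.1)) (σ := σ.prodMap (-σ))
    (f := fun t ↦ (x t, x' t)) (fun p ↦ by simp [hσ])
    (fun t ↦ contDiffAt_snd.prodMk ((hw t).comp (x t, x' t) contDiffAt_fst))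
    (fun t ↦ (hx t).prodMk (hx' t)) (Prod.ext h0 (by simp [h0'])) t
  exact congrArg Prod.fst this

end Autonomous

noncomputable def forceField (a : ℝ) (p : ℝ × ℝ) : ℝ × ℝ :=
  (-400 * p.1 / √(p.2 ^ 2 + 4 * p.1 ^ 2) ^ 3,
    100 * a ^ 2 / p.2 ^ 3 - 25 / p.2 ^ 2 - 200 * p.2 / √(p.2 ^ 2 + 4 * p.1 ^ 2) ^ 3)

noncomputable def reflectFst : ℝ × ℝ →L[ℝ] ℝ × ℝ :=
  (-ContinuousLinearMap.id ℝ ℝ).prodMap (ContinuousLinearMap.id ℝ ℝ)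

@[simp]
theorem reflectFst_apply (p : ℝ × ℝ) : reflectFst p = (-p.1, p.2) := rfl

theorem forceField_reflectFst (a : ℝ) (p : ℝ × ℝ) :
    forceField a (reflectFst p) = reflectFst (forceField a p) := by
  simp only [forceField, reflectFst_apply, neg_sq, Prod.mk.injEq, and_true]
  ring

theorem contDiffAt_forceField (a : ℝ) {p : ℝ × ℝ} (hp : p.2 ≠ 0) :
    ContDiffAt ℝ 1 (forceField a) p := by
  have hS : √(p.2 ^ 2 + 4 * p.1 ^ 2) ^ 3 ≠ 0 := by positivity
  have hsqrt : ContDiffAt ℝ 1 (fun q : ℝ × ℝ ↦ √(q.2 ^ 2 + 4 * q.1 ^ 2) ^ 3) p :=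
    ((contDiffAt_snd.pow 2).add (contDiffAt_const.mul (contDiffAt_fst.pow 2))).sqrt
      (by positivity) |>.pow 3
  refine ContDiffAt.prodMk ((contDiffAt_const.mul contDiffAt_fst).div hsqrt hS) ?_
  refine ((ContDiffAt.div contDiffAt_const (contDiffAt_snd.pow 3) (by positivity)).sub
    (ContDiffAt.div contDiffAt_const (contDiffAt_snd.pow 2) (by positivity))).sub ?_
  exact (contDiffAt_const.mul contDiffAt_snd).div hsqrt hS

theorem F_odd_R_even_general
    (a : ℝ) (F R : ℝ → ℝ)
    (hF : ContDiff ℝ 2 F) (hR : ContDiff ℝ 2 R)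
    (hRpos : ∀ t, 0 < R t)
    (hFode : ∀ t, deriv (deriv F) t =
      -400 * F t / Real.sqrt (R t ^ 2 + 4 * F t ^ 2) ^ 3)
    (hRode : ∀ t, deriv (deriv R) t =
      100 * a ^ 2 / R t ^ 3 - 25 / R t ^ 2
        - 200 * R t / Real.sqrt (R t ^ 2 + 4 * F t ^ 2) ^ 3)
    (hF0 : F 0 = 0) (hR0 : deriv R 0 = 0) :
    ∀ t : ℝ, F (-t) = -F t ∧ R (-t) = R t := by
  have hFd : Differentiable ℝ F := hF.differentiable two_ne_zero
  have hRd : Differentiable ℝ R := hR.differentiable two_ne_zero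
  have hFd' : Differentiable ℝ (deriv F) := (hF.deriv' (n := 1)).differentiable one_ne_zero
  have hRd' : Differentiable ℝ (deriv R) := (hR.deriv' (n := 1)).differentiable one_ne_zero
  intro t
  have key := ODE_secondOrder_timeReversal_eq (forceField_reflectFst a)
    (x := fun t ↦ (F t, R t)) (x' := fun t ↦ (deriv F t, deriv R t))
    (fun t ↦ contDiffAt_forceField a (hRpos t).ne')
    (fun t ↦ (hFd t).hasDerivAt.prodMk (hRd t).hasDerivAt)
    (fun t ↦ by simpa only [forceField, ← hFode, ← hRode]
      using (hFd' t).hasDerivAt.prodMk (hRd' t).hasDerivAt)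
    (by simp [hF0]) (by simp [hR0]) t
  simp only [reflectFst_apply, Prod.mk.injEq] at key
  exact ⟨by linarith [key.1], key.2⟩

/-- if `F 0 = 0` and `R' 0 = 0`, then `F` is odd and `R` is even. -/
theorem F_odd_R_even
    (a b : ℝ) (F R : ℝ → ℝ)
    (hF : ContDiff ℝ 2 F) (hR : ContDiff ℝ 2 R)
    (hRpos : ∀ t, 0 < R t)
    (hFode : ∀ t, deriv (deriv F) t =
      -400 * F t / Real.sqrt (R t ^ 2 + 4 * F t ^ 2) ^ 3)
    (hRode : ∀ t, deriv (deriv R) t =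
      100 * a ^ 2 / R t ^ 3 - 25 / R t ^ 2
        - 200 * R t / Real.sqrt (R t ^ 2 + 4 * F t ^ 2) ^ 3)
    (hF0 : F 0 = 0) (hR0 : deriv R 0 = 0) :
    ∀ t : ℝ, F (-t) = -F t ∧ R (-t) = R t :=
  F_odd_R_even_general a F R hF hR hRpos hFode hRode hF0 hR0
end

section
/- Assume F(0) = 0 and R'(0) = 0 ('odd/even implies odd'). If T ∈ ℝ satisfies F'(T) = 0 and R'(T) = 0, then F(2T) = 0 and R'(2T) = 0. -/
/-!
The equations form an autonomous second-order system `u'' = f(u)` for `u = (F, R)`, and such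
systems are reversible: if `u` is a solution then so is `t ↦ u (2T - t)`. When `u' T = 0` the two
solutions share their position and velocity at `T`, so, the right-hand side being `C¹` wherever
`R ≠ 0`, uniqueness for the ODE makes them coincide. Evaluating at `t = 0` turns `F 0 = 0` and
`R' 0 = 0` into `F (2T) = 0` and `R' (2T) = 0`.
-/

open Set Topology

section Autonomous

variable {E : Type*} [NormedAddCommGroup E] [NormedSpace ℝ E]

theorem ODE_solution_unique_of_contDiffAt_s6 {v : E → E} {x y : ℝ → E}
    (hv : ∀ t, ContDiffAt ℝ 1 v (x t)) (hx : ∀ t, HasDerivAt x (v (x t)) t)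
    (hy : ∀ t, HasDerivAt y (v (y t)) t) {t₀ : ℝ} (h₀ : x t₀ = y t₀) : x = y := by
  have hxc : Continuous x := continuous_iff_continuousAt.2 fun t => (hx t).continuousAt
  have hyc : Continuous y := continuous_iff_continuousAt.2 fun t => (hy t).continuousAt
  have hopen : IsOpen {t | x t = y t} := by
    refine isOpen_iff_mem_nhds.2 fun t ht => ?_
    obtain ⟨K, U, hU, hlip⟩ := (hv t).exists_lipschitzOnWith
    have hxU : ∀ᶠ s in 𝓝 t, x s ∈ U := hxc.continuousAt.preimage_mem_nhds hU
    have hyU : ∀ᶠ s in 𝓝 t, y s ∈ U := hyc.continuousAt.preimage_mem_nhds (ht ▸ hU)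
    exact ODE_solution_unique_of_eventually (v := fun _ => v) (s := fun _ => U)
      (.of_forall fun _ => hlip) (hxU.mono fun s hs => ⟨hx s, hs⟩)
      (hyU.mono fun s hs => ⟨hy s, hs⟩) ht
  have huniv := IsClopen.eq_univ ⟨isClosed_eq hxc hyc, hopen⟩ ⟨t₀, h₀⟩
  exact funext fun t => (huniv ▸ mem_univ t : t ∈ {t | x t = y t})

theorem ODE_secondOrder_solution_reflect {f : E → E} {u u' : ℝ → E}
    (hf : ∀ t, ContDiffAt ℝ 1 f (u t)) (hu : ∀ t, HasDerivAt u (u' t) t)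
    (hu' : ∀ t, HasDerivAt u' (f (u t)) t) {T : ℝ} (hT : u' T = 0) (t : ℝ) :
    u (2 * T - t) = u t ∧ u' (2 * T - t) = -u' t := by
  let v : E × E → E × E := fun p => (p.2, f p.1)
  have hv : ∀ t, ContDiffAt ℝ 1 v (u t, u' t) := fun t =>
    contDiffAt_snd.prodMk ((hf t).comp (u t, u' t) contDiffAt_fst)
  have hsol : ∀ t, HasDerivAt (fun s => (u s, u' s)) (v (u t, u' t)) t := fun t =>
    (hu t).prodMk (hu' t)
  have hrev : ∀ t, HasDerivAt (fun s => (u (2 * T - s), -u' (2 * T - s)))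
      (v (u (2 * T - t), -u' (2 * T - t))) t := fun t => by
    simpa [v] using ((hu _).comp_const_sub _ t).prodMk ((hu' _).comp_const_sub _ t).neg
  have hsym := congrFun (ODE_solution_unique_of_contDiffAt_s6 hv hsol hrev (t₀ := T)
    (by simp [hT, two_mul])) t
  simp only [Prod.ext_iff] at hsym
  exact ⟨hsym.1.symm, by rw [hsym.2, neg_neg]⟩

end Autonomous

noncomputable def acceleration (a : ℝ) (p : ℝ × ℝ) : ℝ × ℝ :=
  (-400 * p.1 / √(p.2 ^ 2 + 4 * p.1 ^ 2) ^ 3,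
    100 * a ^ 2 / p.2 ^ 3 - 25 / p.2 ^ 2 - 200 * p.2 / √(p.2 ^ 2 + 4 * p.1 ^ 2) ^ 3)

theorem contDiffAt_acceleration (a : ℝ) {p : ℝ × ℝ} (hp : p.2 ≠ 0) :
    ContDiffAt ℝ 1 (acceleration a) p := by
  unfold acceleration
  fun_prop (disch := positivity)

theorem odd_even_implies_odd_general
    (a : ℝ) (F R : ℝ → ℝ)
    (hF : ContDiff ℝ 2 F) (hR : ContDiff ℝ 2 R)
    (hRpos : ∀ t, 0 < R t)
    (hFode : ∀ t, deriv (deriv F) t =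
      -400 * F t / Real.sqrt (R t ^ 2 + 4 * F t ^ 2) ^ 3)
    (hRode : ∀ t, deriv (deriv R) t =
      100 * a ^ 2 / R t ^ 3 - 25 / R t ^ 2
        - 200 * R t / Real.sqrt (R t ^ 2 + 4 * F t ^ 2) ^ 3)
    (hF0 : F 0 = 0) (hR0 : deriv R 0 = 0)
    (T : ℝ) (hFT : deriv F T = 0) (hRT : deriv R T = 0) :
    F (2 * T) = 0 ∧ deriv R (2 * T) = 0 := by
  have hd {g : ℝ → ℝ} (hg : ContDiff ℝ 2 g) (t : ℝ) : HasDerivAt g (deriv g t) t :=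
    (hg.differentiable two_ne_zero t).hasDerivAt
  have hdd {g : ℝ → ℝ} (hg : ContDiff ℝ 2 g) (t : ℝ) :
      HasDerivAt (deriv g) (deriv (deriv g) t) t :=
    ((hg.iterate_deriv' 1 1).differentiable one_ne_zero t).hasDerivAt
  have hsol (t : ℝ) : HasDerivAt (fun s => (deriv F s, deriv R s))
      (acceleration a (F t, R t)) t := by
    simpa only [acceleration, ← hFode, ← hRode] using (hdd hF t).prodMk (hdd hR t)
  obtain ⟨hposition, hvelocity⟩ := ODE_secondOrder_solution_reflect
    (fun t => contDiffAt_acceleration a (hRpos t).ne') (fun t => (hd hF t).prodMk (hd hR t))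
    hsol (T := T) (by simp [hFT, hRT]) 0
  simp only [sub_zero, Prod.ext_iff, Prod.snd_neg] at hposition hvelocity
  exact ⟨hposition.1.trans hF0, by rw [hvelocity.2, hR0, neg_zero]⟩

/-- odd/even implies odd, i.e. if `F' T = 0` and `R' T = 0`
then `F (2 T) = 0` and `R' (2 T) = 0`. -/
theorem odd_even_implies_odd
    (a b : ℝ) (F R : ℝ → ℝ)
    (hF : ContDiff ℝ 2 F) (hR : ContDiff ℝ 2 R)
    (hRpos : ∀ t, 0 < R t)
    (hFode : ∀ t, deriv (deriv F) t =
      -400 * F t / Real.sqrt (R t ^ 2 + 4 * F t ^ 2) ^ 3)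
    (hRode : ∀ t, deriv (deriv R) t =
      100 * a ^ 2 / R t ^ 3 - 25 / R t ^ 2
        - 200 * R t / Real.sqrt (R t ^ 2 + 4 * F t ^ 2) ^ 3)
    (hF0 : F 0 = 0) (hR0 : deriv R 0 = 0)
    (T : ℝ) (hFT : deriv F T = 0) (hRT : deriv R T = 0) :
    F (2 * T) = 0 ∧ deriv R (2 * T) = 0 :=
  odd_even_implies_odd_general a F R hF hR hRpos hFode hRode hF0 hR0 T hFT hRT
end
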